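/- Let n and i be natural numbers with i ≥ 2 and n ≥ i + 3. Then the number of isolate dominating sets of the path P_n of cardinality i satisfies d_0(P_n, i) = d(P_{n−2}, i−1) + d(P_{n−3}, i−1) + Σ_{k=3}^{i} d_0(P_{n−k}, i−k+1) + Σ_{k=4}^{i+1} d_0(P_{n−k}, i−k+2). -/

import Mathlib

open Finset

/-- `S` is a dominating set of `G`: every vertex not in `S` is adjacent to a vertex of `S`. -/
def IsDominatingSet {V : Type*} (G : SimpleGraph V) (S : Finset V) : Prop :=
  ∀ v : V, v ∉ S → ∃ u ∈ S, G.Adj u v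

/-- `S` is an isolate dominating set of `G`: a dominating set whose induced
subgraph has an isolated vertex. -/
def IsIsolateDominatingSet {V : Type*} (G : SimpleGraph V) (S : Finset V) : Prop :=
  IsDominatingSet G S ∧ ∃ v ∈ S, ∀ u ∈ S, ¬ G.Adj v u

/-- `d(G, i)`: the number of dominating sets of `G` of cardinality `i`. -/
noncomputable def domCount {V : Type*} [Fintype V] (G : SimpleGraph V) (i : ℕ) : ℕ :=
  Set.ncard {S : Finset V | IsDominatingSet G S ∧ S.card = i}

/-- `d₀(G, i)`: the number of isolate dominating sets of `G` of cardinality `i`. -/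
noncomputable def isoDomCount {V : Type*} [Fintype V] (G : SimpleGraph V) (i : ℕ) : ℕ :=
  Set.ncard {S : Finset V | IsIsolateDominatingSet G S ∧ S.card = i}

/-- `γ₀(G)`: the isolate domination number, the minimum cardinality of an
isolate dominating set of `G`. -/
noncomputable def isoDomNumber {V : Type*} [Fintype V] (G : SimpleGraph V) : ℕ :=
  sInf {k : ℕ | ∃ S : Finset V, IsIsolateDominatingSet G S ∧ S.card = k}

/-!
Model `P_n` on `{0, …, n - 1} ⊆ ℕ`. An isolate dominating set `S` dominates `0`, so it begins
with a maximal run `[a, c - 1)` of consecutive vertices, where `a ∈ {0, 1}`, and `c - 1 ∉ S`.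
The vertex `c - 1` is dominated by `c - 2 ∈ S` and separates the run from the rest, so `S` is
dominating iff `T = {v - c | c ≤ v ∈ S}` is a dominating set of `P_{n-c}`, and `S` has an
isolated vertex iff the run is a single vertex or `T` has one. A run of length `1`
(`c = a + 2`) thus contributes `d(P_{n-c}, i - 1)`, a longer one `d₀(P_{n-c}, i - (c - 1 - a))`;
the run is shorter than `i`, because for `i ≥ 2` the run alone has no isolated vertex. The runs
starting at `a = 0` give the first and third terms, those at `a = 1` the second and fourth.
-/

def PathDominates (n : ℕ) (S : Finset ℕ) : Prop :=
  ∀ v < n, v ∉ S → ∃ u ∈ S, u + 1 = v ∨ v + 1 = u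

def HasIsolatedPoint (S : Finset ℕ) : Prop :=
  ∃ v ∈ S, ∀ u ∈ S, ¬ (v + 1 = u ∨ u + 1 = v)

lemma isDominatingSet_pathGraph_iff {n : ℕ} {S : Finset (Fin n)} :
    IsDominatingSet (SimpleGraph.pathGraph n) S ↔ PathDominates n (S.image Fin.val) := by
  simp +contextual [IsDominatingSet, PathDominates, Fin.forall_iff, Fin.exists_iff,
    SimpleGraph.pathGraph_adj]

lemma isIsolateDominatingSet_pathGraph_iff {n : ℕ} {S : Finset (Fin n)} :
    IsIsolateDominatingSet (SimpleGraph.pathGraph n) S ↔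
      PathDominates n (S.image Fin.val) ∧ HasIsolatedPoint (S.image Fin.val) := by
  simp [IsIsolateDominatingSet, isDominatingSet_pathGraph_iff, HasIsolatedPoint,
    SimpleGraph.pathGraph_adj]

lemma ncard_setOf_eq_card_filter_powerset_range {n : ℕ} {P : Finset (Fin n) → Prop}
    {P' : Finset ℕ → Prop} [DecidablePred P'] (h : ∀ S, P S ↔ P' (S.image Fin.val)) :
    {S | P S}.ncard = #{T ∈ (range n).powerset | P' T} := by
  have hrange : (univ : Finset (Fin n)).image Fin.val = range n := by
    ext; simp [Fin.exists_iff]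
  rw [← hrange, powerset_image, filter_image,
    card_image_of_injective _ (image_injective Fin.val_injective), ← Set.ncard_coe_finset]
  congr
  ext S
  simp [h]

instance (n : ℕ) : DecidablePred (PathDominates n) := fun _ => by
  unfold PathDominates; infer_instance

instance : DecidablePred HasIsolatedPoint := fun _ => by
  unfold HasIsolatedPoint; infer_instance

def pathDomCount (n i : ℕ) : ℕ :=
  #{T ∈ (range n).powerset | PathDominates n T ∧ #T = i}

def pathIsoDomCount (n i : ℕ) : ℕ :=
  #{T ∈ (range n).powerset | PathDominates n T ∧ HasIsolatedPoint T ∧ #T = i}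

lemma domCount_pathGraph (n i : ℕ) : domCount (SimpleGraph.pathGraph n) i = pathDomCount n i :=
  ncard_setOf_eq_card_filter_powerset_range fun S => by
    rw [isDominatingSet_pathGraph_iff, card_image_of_injective _ Fin.val_injective]

lemma isoDomCount_pathGraph (n i : ℕ) :
    isoDomCount (SimpleGraph.pathGraph n) i = pathIsoDomCount n i :=
  ncard_setOf_eq_card_filter_powerset_range fun S => by
    rw [isIsolateDominatingSet_pathGraph_iff, card_image_of_injective _ Fin.val_injective,
      and_assoc]

def glue (c : ℕ) (Q T : Finset ℕ) : Finset ℕ := Q ∪ T.map (addRightEmbedding c)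

noncomputable def shiftDown (c : ℕ) (S : Finset ℕ) : Finset ℕ :=
  S.preimage (· + c) (add_left_injective c).injOn

section glue
variable {c n x : ℕ} {Q T S : Finset ℕ}

lemma mem_glue : x ∈ glue c Q T ↔ x ∈ Q ∨ ∃ y ∈ T, y + c = x := by
  simp [glue]

@[simp] lemma mem_shiftDown : x ∈ shiftDown c S ↔ x + c ∈ S := by
  simp [shiftDown]

lemma add_mem_glue (hQ : Q ⊆ range c) : x + c ∈ glue c Q T ↔ x ∈ T := by
  have : x + c ∉ Q := fun h => by simpa using hQ h
  simp [mem_glue, this]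

lemma glue_inter_range (hQ : Q ⊆ range c) : glue c Q T ∩ range c = Q := by
  ext x
  have := @hQ x
  simp only [mem_inter, mem_glue, mem_range] at this ⊢
  constructor
  · rintro ⟨hx | ⟨y, -, rfl⟩, hxc⟩
    · exact hx
    · omega
  · exact fun hx => ⟨.inl hx, this hx⟩

lemma shiftDown_glue (hQ : Q ⊆ range c) : shiftDown c (glue c Q T) = T := by
  ext; simp [add_mem_glue hQ]

lemma glue_inter_range_shiftDown : glue c (S ∩ range c) (shiftDown c S) = S := by
  ext x
  simp only [mem_glue, mem_inter, mem_range, mem_shiftDown]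
  constructor
  · rintro (⟨hx, -⟩ | ⟨y, hy, rfl⟩) <;> assumption
  · intro hx
    rcases lt_or_ge x c with hxc | hxc
    · exact .inl ⟨hx, hxc⟩
    · exact .inr ⟨x - c, by rwa [Nat.sub_add_cancel hxc], Nat.sub_add_cancel hxc⟩

lemma card_glue (hQ : Q ⊆ range c) : #(glue c Q T) = #Q + #T := by
  rw [glue, card_union_of_disjoint, card_map]
  rw [disjoint_left]
  rintro _ hx hx'
  obtain ⟨y, -, rfl⟩ := mem_map.1 hx'
  simpa using hQ hx

lemma glue_subset_range_iff (hQ : Q ⊆ range c) (hcn : c ≤ n) :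
    glue c Q T ⊆ range n ↔ T ⊆ range (n - c) := by
  constructor
  · intro h y hy
    have := h ((add_mem_glue hQ).2 hy)
    simp only [mem_range] at this ⊢
    omega
  · intro h x hx
    rcases mem_glue.1 hx with hx | ⟨y, hy, rfl⟩
    · exact range_subset_range.2 hcn (hQ hx)
    · have := h hy
      simp only [mem_range] at this ⊢
      omega

lemma card_filter_inter_range_eq (hQ : Q ⊆ range c) (hcn : c ≤ n) (P : Finset ℕ → Prop)
    [DecidablePred P] :
    #{S ∈ (range n).powerset | P S ∧ S ∩ range c = Q} =
      #{T ∈ (range (n - c)).powerset | P (glue c Q T)} := by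
  refine card_nbij' (shiftDown c) (glue c Q) ?_ ?_ ?_ ?_
  · intro S hS
    simp only [coe_filter, mem_powerset, Set.mem_ofPred_eq] at hS ⊢
    obtain ⟨hSn, hP, rfl⟩ := hS
    rw [← glue_subset_range_iff inter_subset_right hcn, glue_inter_range_shiftDown]
    exact ⟨hSn, hP⟩
  · intro T hT
    simp only [coe_filter, mem_powerset, Set.mem_ofPred_eq] at hT ⊢
    exact ⟨(glue_subset_range_iff hQ hcn).2 hT.1, hT.2, glue_inter_range hQ⟩
  · intro S hS
    simp only [coe_filter, Set.mem_ofPred_eq] at hS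
    rw [← hS.2.2, glue_inter_range_shiftDown]
  · intro T _
    exact shiftDown_glue hQ

end glue

section split
variable {c n : ℕ} {Q T : Finset ℕ}

lemma pathDominates_glue_iff (hQ : Q ⊆ range (c - 1)) (hQc : c - 2 ∈ Q) (hcn : c ≤ n) :
    PathDominates n (glue c Q T) ↔ PathDominates (c - 1) Q ∧ PathDominates (n - c) T := by
  have hQ' : Q ⊆ range c := hQ.trans (range_subset_range.2 (Nat.sub_le c 1))
  constructor
  · intro h
    refine ⟨fun v hv hvQ => ?_, fun w hw hwT => ?_⟩
    · have hvg : v ∉ glue c Q T := by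
        rw [mem_glue]
        rintro (hv' | ⟨y, -, rfl⟩)
        · exact hvQ hv'
        · omega
      obtain ⟨u, hu, hadj⟩ := h v (by omega) hvg
      rcases mem_glue.1 hu with hu | ⟨y, -, rfl⟩
      · exact ⟨u, hu, hadj⟩
      · omega
    · obtain ⟨u, hu, hadj⟩ := h (w + c) (by omega) ((add_mem_glue hQ').not.2 hwT)
      rcases mem_glue.1 hu with hu | ⟨y, hy, rfl⟩
      · have := mem_range.1 (hQ hu); omega
      · exact ⟨y, hy, by omega⟩
  · rintro ⟨hQd, hTd⟩ v hv hvg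
    have hc : 2 ≤ c := by have := mem_range.1 (hQ hQc); omega
    rcases lt_trichotomy v (c - 1) with hvc | rfl | hvc
    · obtain ⟨u, hu, hadj⟩ := hQd v hvc fun hvQ => hvg (mem_glue.2 (.inl hvQ))
      exact ⟨u, mem_glue.2 (.inl hu), hadj⟩
    · exact ⟨c - 2, mem_glue.2 (.inl hQc), by omega⟩
    · obtain ⟨w, rfl⟩ := Nat.exists_eq_add_of_le' (show c ≤ v by omega)
      obtain ⟨u, hu, hadj⟩ := hTd w (by omega) ((add_mem_glue hQ').not.1 hvg)
      exact ⟨u + c, (add_mem_glue hQ').2 hu, by omega⟩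

lemma hasIsolatedPoint_glue_iff (hQ : Q ⊆ range (c - 1)) :
    HasIsolatedPoint (glue c Q T) ↔ HasIsolatedPoint Q ∨ HasIsolatedPoint T := by
  have hQ' : Q ⊆ range c := hQ.trans (range_subset_range.2 (Nat.sub_le c 1))
  constructor
  · rintro ⟨v, hv, hiso⟩
    rcases mem_glue.1 hv with hv | ⟨w, hw, rfl⟩
    · exact .inl ⟨v, hv, fun u hu => hiso u (mem_glue.2 (.inl hu))⟩
    · exact .inr ⟨w, hw, fun u hu hadj => hiso (u + c) ((add_mem_glue hQ').2 hu) (by omega)⟩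
  · rintro (⟨v, hv, hiso⟩ | ⟨w, hw, hiso⟩)
    · refine ⟨v, mem_glue.2 (.inl hv), fun u hu => ?_⟩
      rcases mem_glue.1 hu with hu | ⟨y, -, rfl⟩
      · exact hiso u hu
      · have := mem_range.1 (hQ hv); omega
    · refine ⟨w + c, (add_mem_glue hQ').2 hw, fun u hu => ?_⟩
      rcases mem_glue.1 hu with hu | ⟨y, hy, rfl⟩
      · have := mem_range.1 (hQ hu); omega
      · exact fun hadj => hiso y hy (by omega)

lemma pathDominates_Ico {a b : ℕ} (ha : a ≤ 1) (hab : a < b) : PathDominates b (Ico a b) := by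
  intro v hv hvI
  exact ⟨1, mem_Ico.2 (by simp at hvI; omega), by simp at hvI; omega⟩

lemma hasIsolatedPoint_Ico_iff {a b : ℕ} : HasIsolatedPoint (Ico a b) ↔ b = a + 1 := by
  constructor
  · rintro ⟨v, hv, hiso⟩
    rw [mem_Ico] at hv
    by_contra hb
    rcases Nat.lt_or_ge (v + 1) b with h | h
    · exact hiso (v + 1) (mem_Ico.2 (by omega)) (.inl rfl)
    · exact hiso (v - 1) (mem_Ico.2 (by omega)) (.inr (by omega))
  · rintro rfl
    exact ⟨a, by simp, fun u hu => by simp at hu; omega⟩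

end split

def firstPosGap (S : Finset ℕ) : ℕ :=
  Nat.find (Infinite.exists_notMem_finset (insert 0 S))

/-- When `S` dominates `0`, the first run of consecutive elements of `S` is `Ico a (c - 1)`, and
`c - 1 ∉ S`. -/
def firstRun (S : Finset ℕ) : Σ _ : ℕ, ℕ :=
  ⟨if 0 ∈ S then 0 else 1, firstPosGap S + 1⟩

lemma inter_range_eq_Ico_iff {S : Finset ℕ} {a c : ℕ} (ha : a ≤ 1) (hac : a + 2 ≤ c) :
    S ∩ range c = Ico a (c - 1) ↔ firstRun S = ⟨a, c⟩ := by
  obtain ⟨g, rfl⟩ : ∃ g, c = g + 1 := ⟨c - 1, by omega⟩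
  have hstart : (if 0 ∈ S then 0 else 1) = a ↔ (0 ∈ S ↔ a = 0) := by
    split_ifs with h <;> simp only [h, true_iff, false_iff] <;> omega
  rw [firstRun, Sigma.mk.inj_iff, heq_iff_eq, hstart, add_left_inj, firstPosGap, Nat.find_eq_iff,
    Nat.add_sub_cancel]
  simp only [Finset.ext_iff, mem_inter, mem_range, mem_Ico, mem_insert, not_or]
  constructor
  · intro h
    refine ⟨?_, ⟨by omega, fun hg => by simpa [hg] using h g⟩, fun y hy => ?_⟩
    · have := h 0; grind
    · have := h y; grind
  · rintro ⟨h0, ⟨-, hgS⟩, hlt⟩ x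
    have := hlt x
    grind

lemma firstRun_mem {n i : ℕ} {S : Finset ℕ} (hn : 1 ≤ n) (hi : 2 ≤ i)
    (hdom : PathDominates n S) (hiso : HasIsolatedPoint S) (hcard : #S = i) :
    firstRun S ∈ (range 2).sigma fun a => Icc (a + 2) (a + i) := by
  obtain ⟨a, hstart⟩ : ∃ a, (if 0 ∈ S then 0 else 1) = a := ⟨_, rfl⟩
  set g := firstPosGap S
  have hgS : g ∉ insert 0 S := Nat.find_spec (Infinite.exists_notMem_finset (insert 0 S))
  have hg0 : g ≠ 0 := fun h => hgS (h ▸ mem_insert_self 0 S)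
  have ha : a ≤ 1 ∧ a + 1 ≤ g := by
    by_cases h0 : 0 ∈ S
    · simp only [h0, if_true] at hstart; omega
    · obtain ⟨u, hu, hadj⟩ := hdom 0 hn h0
      obtain rfl : u = 1 := by omega
      have : g ≠ 1 := fun h => hgS (h ▸ mem_insert_of_mem hu)
      simp only [h0, if_false] at hstart; omega
  have hblock : S ∩ range (g + 1) = Ico a g :=
    (inter_range_eq_Ico_iff ha.1 (by omega)).2 (by rw [firstRun, hstart])
  have hsub : Ico a g ⊆ S := hblock ▸ inter_subset_left
  have hle : g - a ≤ i := by simpa [hcard] using card_le_card hsub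
  have hne : g - a ≠ i := by
    intro h
    have hS : Ico a g = S := eq_of_subset_of_card_le hsub (by simp [hcard, h])
    have := hasIsolatedPoint_Ico_iff.1 (hS ▸ hiso)
    omega
  simp only [firstRun, hstart, mem_sigma, mem_range, mem_Icc]
  omega

def firstRunFiber (n i a c : ℕ) : Finset (Finset ℕ) :=
  {S ∈ (range n).powerset |
    (PathDominates n S ∧ HasIsolatedPoint S ∧ #S = i) ∧ S ∩ range c = Ico a (c - 1)}

section count
variable {n i : ℕ}

lemma pathIsoDomCount_eq_sum_card_firstRunFiber (hn : 1 ≤ n) (hi : 2 ≤ i) :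
    pathIsoDomCount n i = ∑ x ∈ (range 2).sigma fun a => Icc (a + 2) (a + i),
      #(firstRunFiber n i x.1 x.2) := by
  rw [pathIsoDomCount, card_eq_sum_card_fiberwise (f := firstRun) fun S hS => ?_]
  · refine sum_congr rfl fun x hx => ?_
    simp only [mem_sigma, mem_range, mem_Icc] at hx
    rw [firstRunFiber, filter_filter]
    refine congr_arg card (filter_congr fun S _ => and_congr_right fun _ => ?_)
    rw [inter_range_eq_Ico_iff (by omega) hx.2.1]
  · simp only [coe_filter, Set.mem_ofPred_eq] at hS
    exact firstRun_mem hn hi hS.2.1 hS.2.2.1 hS.2.2.2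

lemma card_firstRunFiber {a c : ℕ} (ha : a ≤ 1) (hac : a + 2 ≤ c) (hci : c ≤ a + i)
    (hcn : c ≤ n) :
    #(firstRunFiber n i a c) =
      if c = a + 2 then pathDomCount (n - c) (i - 1)
      else pathIsoDomCount (n - c) (i + 1 + a - c) := by
  have hQ : Ico a (c - 1) ⊆ range (c - 1) := fun x hx => by
    simp only [mem_Ico, mem_range] at hx ⊢; omega
  have hQ' : Ico a (c - 1) ⊆ range c := hQ.trans (range_subset_range.2 (Nat.sub_le c 1))
  rw [firstRunFiber, card_filter_inter_range_eq hQ' hcn]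
  simp only [pathDominates_glue_iff hQ (mem_Ico.2 (by omega)) hcn, hasIsolatedPoint_glue_iff hQ,
    hasIsolatedPoint_Ico_iff, card_glue hQ',
    Nat.card_Ico, pathDominates_Ico (b := c - 1) ha (by omega), true_and]
  split_ifs with h
  · rw [pathDomCount]
    congr 1
    refine filter_congr fun T _ => ?_
    simp only [show c - 1 = a + 1 by omega, true_or, true_and]
    exact and_congr_right fun _ => by omega
  · rw [pathIsoDomCount]
    congr 1
    refine filter_congr fun T _ => ?_
    simp only [show c - 1 ≠ a + 1 by omega, false_or]
    exact and_congr_right fun _ => and_congr_right fun _ => by omega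

lemma sum_card_firstRunFiber {a : ℕ} (ha : a ≤ 1) (hi : 2 ≤ i) (hn : a + i ≤ n) :
    ∑ c ∈ Icc (a + 2) (a + i), #(firstRunFiber n i a c) =
      pathDomCount (n - (a + 2)) (i - 1) +
        ∑ c ∈ Icc (a + 3) (a + i), pathIsoDomCount (n - c) (i + 1 + a - c) := by
  rw [← insert_Icc_add_one_left_eq_Icc (by omega), sum_insert (by simp),
    card_firstRunFiber ha le_rfl (by omega) (by omega), if_pos rfl]
  refine congr_arg _ (sum_congr rfl fun c hc => ?_)
  rw [mem_Icc] at hc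
  rw [card_firstRunFiber ha (by omega) hc.2 (by omega), if_neg (by omega)]

lemma pathIsoDomCount_recurrence (hi : 2 ≤ i) (hn : i + 1 ≤ n) :
    pathIsoDomCount n i =
      pathDomCount (n - 2) (i - 1) + pathDomCount (n - 3) (i - 1) +
        (∑ k ∈ Icc 3 i, pathIsoDomCount (n - k) (i + 1 - k)) +
        ∑ k ∈ Icc 4 (i + 1), pathIsoDomCount (n - k) (i + 2 - k) := by
  rw [pathIsoDomCount_eq_sum_card_firstRunFiber (by omega) hi, sum_sigma, sum_range_succ,
    sum_range_one, sum_card_firstRunFiber le_rfl hi (by omega),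
    sum_card_firstRunFiber zero_le_one hi (by omega)]
  simp only [zero_add, add_zero, Nat.reduceAdd, add_comm 1 i]
  ring

end count

theorem isoDomCount_path_recurrence (n i : ℕ) (hi : 2 ≤ i) (hn : i + 3 ≤ n) :
    isoDomCount (SimpleGraph.pathGraph n) i =
      domCount (SimpleGraph.pathGraph (n - 2)) (i - 1) +
      domCount (SimpleGraph.pathGraph (n - 3)) (i - 1) +
      (∑ k ∈ Finset.Icc 3 i,
        isoDomCount (SimpleGraph.pathGraph (n - k)) (i + 1 - k)) +
      (∑ k ∈ Finset.Icc 4 (i + 1),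
        isoDomCount (SimpleGraph.pathGraph (n - k)) (i + 2 - k)) := by
  simp only [isoDomCount_pathGraph, domCount_pathGraph]
  exact pathIsoDomCount_recurrence hi (by omega)
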